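/- arXiv:1510.01453 — 5 statements merged into one kernel-verified Lean document; each statement's English description precedes it below -/
import Mathlib

section
/- Let H be a constraint graph such that for every board G, the homomorphism space Hom(G,H) is single-site fillable. Then H has a safe symbol. -/
/-- A graph, possibly with loops: a symmetric relation on vertices. -/
structure LoopyGraph (V : Type*) where
  Adj : V → V → Prop
  symm : ∀ {u v : V}, Adj u v → Adj v u

namespace LoopyGraph

variable {VG VH : Type*}

/-- `G.ReachIn n x y`: there is a walk of length exactly `n` from `x` to `y`. -/
def ReachIn (G : LoopyGraph VG) : ℕ → VG → VG → Prop
  | 0, x, y => x = y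
  | n + 1, x, y => ∃ z, G.Adj x z ∧ G.ReachIn n z y

/-- `dist(A, B) ≥ g`: no walk of length `< g` connects a point of `A` to a point of `B`. -/
def DistGe (G : LoopyGraph VG) (A B : Set VG) (g : ℕ) : Prop :=
  ∀ x ∈ A, ∀ y ∈ B, ∀ n < g, ¬ G.ReachIn n x y

/-- A graph homomorphism from `G` to `H`. -/
def IsHom (G : LoopyGraph VG) (H : LoopyGraph VH) (f : VG → VH) : Prop :=
  ∀ ⦃x y : VG⦄, G.Adj x y → H.Adj (f x) (f y)

/-- `f` is a graph homomorphism on the subgraph of `G` induced by `S` (local admissibility). -/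
def IsHomOn (G : LoopyGraph VG) (H : LoopyGraph VH) (f : VG → VH) (S : Set VG) : Prop :=
  ∀ ⦃x⦄, x ∈ S → ∀ ⦃y⦄, y ∈ S → G.Adj x y → H.Adj (f x) (f y)

/-- The configuration `α|_A` is globally admissible: it extends to a point of `Hom(G,H)`. -/
def GlobAdm (G : LoopyGraph VG) (H : LoopyGraph VH) (A : Set VG) (α : VG → VH) : Prop :=
  ∃ ω : VG → VH, G.IsHom H ω ∧ ∀ x ∈ A, ω x = α x

/-- A board: countable, simple, connected, locally finite, with at least two vertices. -/
structure IsBoard (G : LoopyGraph VG) : Prop where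
  countable : Countable VG
  simple : ∀ v : VG, ¬ G.Adj v v
  connected : ∀ x y : VG, ∃ n : ℕ, G.ReachIn n x y
  locallyFinite : ∀ v : VG, {w : VG | G.Adj v w}.Finite
  nontrivial : Nontrivial VG

/-- Single-site fillability of `Hom(G, H)`. -/
def SSF (G : LoopyGraph VG) (H : LoopyGraph VH) : Prop :=
  ∀ (x : VG) (B : Set VG), B ⊆ {y : VG | G.Adj x y} →
    ∀ β : VG → VH, G.IsHomOn H β B →
      ∃ α : VG → VH, G.IsHomOn H α (insert x B) ∧ ∀ y ∈ B, α y = β y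

/-- Topological strong spatial mixing with gap `g`. -/
def TSSM (G : LoopyGraph VG) (H : LoopyGraph VH) (g : ℕ) : Prop :=
  ∀ (A B S : Set VG), A.Finite → B.Finite → S.Finite → G.DistGe A B g →
    ∀ α σ β : VG → VH,
      (∃ ω, G.IsHom H ω ∧ (∀ x ∈ A, ω x = α x) ∧ (∀ x ∈ S, ω x = σ x)) →
      (∃ ω, G.IsHom H ω ∧ (∀ x ∈ S, ω x = σ x) ∧ (∀ x ∈ B, ω x = β x)) →
      ∃ ω, G.IsHom H ω ∧ (∀ x ∈ A, ω x = α x) ∧ (∀ x ∈ S, ω x = σ x) ∧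
        ∀ x ∈ B, ω x = β x

/-- Strong irreducibility with gap `g`. -/
def StrongIrred (G : LoopyGraph VG) (H : LoopyGraph VH) (g : ℕ) : Prop :=
  ∀ (A B : Set VG), A.Finite → B.Finite → A.Nonempty → B.Nonempty → Disjoint A B →
    G.DistGe A B g → ∀ α β : VG → VH,
      G.GlobAdm H A α → G.GlobAdm H B β →
      ∃ ω, G.IsHom H ω ∧ (∀ x ∈ A, ω x = α x) ∧ ∀ x ∈ B, ω x = β x

end LoopyGraph

/-! Apply single-site fillability at the center of the star whose leaves are the vertices of `H`,
each leaf coloured by itself. The leaves are pairwise non-adjacent, so this boundary is locally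
admissible, and the colour filled in at the center is adjacent to every vertex of `H`. -/

namespace LoopyGraph

variable {V W : Type*}

/-- The star with center `none` and leaves `some v`. -/
def star (V : Type*) : LoopyGraph (Option V) where
  Adj a b := Xor (a = none) (b = none)
  symm h := h.symm

theorem star_adj_none_some (v : V) : (star V).Adj none (some v) := by
  simp [star, Xor]

theorem star_not_adj_some_some (v w : V) : ¬ (star V).Adj (some v) (some w) := by
  simp [star, Xor]

theorem star_reachIn_none : ∀ a : Option V, ∃ n, (star V).ReachIn n none a
  | none => ⟨0, rfl⟩
  | some v => ⟨1, some v, star_adj_none_some v, rfl⟩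

theorem star_isBoard [Finite V] [Nonempty V] : (star V).IsBoard where
  countable := inferInstance
  simple a := by simp [star, Xor]
  connected
    | none, b => star_reachIn_none b
    | some v, b =>
      let ⟨n, hn⟩ := star_reachIn_none b
      ⟨n + 1, none, (star V).symm (star_adj_none_some v), hn⟩
  locallyFinite _ := Set.toFinite _
  nontrivial := ⟨none, some Classical.ofNonempty, nofun⟩

theorem SSF.exists_adj_forall_of_star [Nonempty V] {H : LoopyGraph W} (h : (star V).SSF H)
    (f : V → W) : ∃ s, ∀ v, H.Adj s (f v) := by
  have leaves_adj : Set.range some ⊆ {b | (star V).Adj none b} := by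
    rintro _ ⟨v, rfl⟩
    exact star_adj_none_some v
  have leaves_indep : (star V).IsHomOn H (fun a => f (a.getD Classical.ofNonempty))
      (Set.range some) := by
    rintro _ ⟨v, rfl⟩ _ ⟨w, rfl⟩ hvw
    exact absurd hvw (star_not_adj_some_some v w)
  obtain ⟨α, hα, hαf⟩ := h none _ leaves_adj _ leaves_indep
  refine ⟨α none, fun v => ?_⟩
  have hv : some v ∈ Set.range some := ⟨v, rfl⟩
  simpa [hαf _ hv] using
    hα (Set.mem_insert _ _) (Set.mem_insert_of_mem _ hv) (star_adj_none_some v)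

end LoopyGraph

/-- If for every board `G` the homomorphism space `Hom(G, H)` is single-site
fillable, then the constraint graph `H` has a safe symbol. -/
theorem SSF_forall_boards_implies_safe_symbol {VH : Type} [Fintype VH] [Nonempty VH]
    (H : LoopyGraph VH)
    (hssf : ∀ (VG : Type) (G : LoopyGraph VG), G.IsBoard → G.SSF H) :
    ∃ s : VH, ∀ v : VH, H.Adj s v :=
  (hssf _ _ LoopyGraph.star_isBoard).exists_adj_forall_of_star id
end

section
/- A finite simple graph is chordal if and only if it has a perfect elimination ordering, i.e., an ordering v_1,...,v_n of its vertices such that for each i, the induced subgraph on {v_i} ∪ ({v_{i+1},...,v_n} ∩ N(v_i)) is a complete graph. -/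
/-- A simple graph is chordal if every cycle of length at least 4 has a chord. -/
def SimpleGraph.IsChordal {V : Type*} (G : SimpleGraph V) : Prop :=
  ∀ (v : V) (c : G.Walk v v), c.IsCycle → 4 ≤ c.length →
    ∃ u w : V, u ∈ c.support ∧ w ∈ c.support ∧ G.Adj u w ∧ s(u, w) ∉ c.edges

/-!
If `v₁, …, vₙ` is a perfect elimination ordering and `C` is a cycle of length at least 4, the
two neighbours of the earliest vertex of `C` along `C` are later neighbours of it, hence
adjacent, and since `C` is long this edge is a chord.

Conversely, let `S` be a minimum separator of two non-adjacent vertices `a`, `b` of a chordal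
graph, with `A ∋ a` and `B ∋ b` the corresponding components of `G - S`. By minimality every
`x ∈ S` has a neighbour in `A` and one in `B`, so two non-adjacent `x, z ∈ S` would be joined by
a shortest path through `A` and one through `B`; together they form a chordless cycle of length
at least 4. Hence `S` is a clique, and induction on `A ∪ S` (with the clique `S`) gives a
simplicial vertex outside any prescribed clique (Dirac). Removing simplicial vertices one at a
time yields the ordering.
-/

namespace SimpleGraph

variable {V : Type*} {G : SimpleGraph V}

/-! Walks of `(G.induce s).spanningCoe` are the walks of `G` inside `s`, together with the
trivial walks at vertices outside `s`. -/

section InducedSpanning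

variable {s t : Set V} {a u v w x : V}

@[simp]
lemma spanningCoe_induce_adj :
    (G.induce s).spanningCoe.Adj u v ↔ G.Adj u v ∧ u ∈ s ∧ v ∈ s := by
  simp [map_adj]

lemma spanningCoe_induce_mono (h : s ⊆ t) :
    (G.induce s).spanningCoe ≤ (G.induce t).spanningCoe :=
  fun _ _ huv ↦ by
    rw [spanningCoe_induce_adj] at huv ⊢
    exact ⟨huv.1, h huv.2.1, h huv.2.2⟩

lemma Reachable.mem_of_spanningCoe_induce (h : (G.induce s).spanningCoe.Reachable u v)
    (hu : u ∈ s) : v ∈ s := by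
  obtain ⟨p⟩ := h
  by_cases hp : p.Nil
  · exact hp.eq ▸ hu
  · exact (spanningCoe_induce_adj.mp (p.adj_penultimate hp)).2.2

lemma Reachable.spanningCoe_induce_of_adj (h : (G.induce s).spanningCoe.Reachable u v)
    (hu : u ∈ s) (hvw : G.Adj v w) (hw : w ∈ s) : (G.induce s).spanningCoe.Reachable u w :=
  h.trans (spanningCoe_induce_adj.mpr ⟨hvw, h.mem_of_spanningCoe_induce hu, hw⟩).reachable

lemma Reachable.spanningCoe_induce_setOf_reachable
    (h : (G.induce s).spanningCoe.Reachable a v) :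
    (G.induce {w | (G.induce s).spanningCoe.Reachable a w}).spanningCoe.Reachable a v := by
  induction (reachable_iff_reflTransGen _ _).mp h with
  | refl => rfl
  | @tail u w hau huw ih =>
    have hau := (reachable_iff_reflTransGen _ _).mpr hau
    exact (ih hau).trans (spanningCoe_induce_adj.mpr
      ⟨(spanningCoe_induce_adj.mp huw).1, hau, hau.trans huw.reachable⟩).reachable

lemma exists_adj_of_reachable_insert (h : (G.induce (insert x s)).spanningCoe.Reachable a v)
    (h' : ¬ (G.induce s).spanningCoe.Reachable a v) (ha : a ∈ s) :
    ∃ u, (G.induce s).spanningCoe.Reachable a u ∧ G.Adj u x := by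
  obtain ⟨p⟩ := h
  obtain ⟨d, -, hd₁, hd₂⟩ := p.exists_boundary_dart
    {u | (G.induce s).spanningCoe.Reachable a u} (Reachable.refl a) h'
  obtain ⟨⟨y, z⟩, hyz⟩ := d
  obtain ⟨hadj, -, hd₂s⟩ := spanningCoe_induce_adj.mp hyz
  refine ⟨y, hd₁, ?_⟩
  rcases hd₂s with hx | hd₂s
  · exact hx ▸ hadj
  · exact absurd (Reachable.spanningCoe_induce_of_adj hd₁ ha hadj hd₂s) hd₂

end InducedSpanning

namespace Walk

variable {u v : V}

lemma length_le_of_adj_getVert {p : G.Walk u v} (hp : p.length = G.dist u v) {i j : ℕ}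
    (h : G.Adj (p.getVert i) (p.getVert j)) : p.length ≤ i + 1 + (p.length - j) := by
  have := G.dist_le ((p.take i).append (cons h (p.drop j)))
  simp only [length_append, take_length, length_cons, drop_length] at this
  omega

lemma isChordless_of_length_eq_dist {p : G.Walk u v} (hp : p.length = G.dist u v) :
    p.IsChordless := by
  rw [isChordless_iff_forall_mem_edges]
  intro u' v' hu' hv' hadj
  obtain ⟨i, rfl, hi⟩ := mem_support_iff_exists_getVert.mp hu'
  obtain ⟨j, rfl, hj⟩ := mem_support_iff_exists_getVert.mp hv'
  have hij := length_le_of_adj_getVert hp hadj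
  have hji := length_le_of_adj_getVert hp hadj.symm
  have hne : i ≠ j := fun h ↦ hadj.ne (h ▸ rfl)
  rw [mk_mem_edges_iff_exists]
  rcases Nat.lt_or_gt_of_ne hne with h | h
  · exact ⟨i, by omega, by rw [show j = i + 1 by omega]⟩
  · exact ⟨j, by omega, by rw [show i = j + 1 by omega, Sym2.eq_swap]⟩

lemma IsPath.start_notMem_tail_support {p : G.Walk u v} (hp : p.IsPath) :
    u ∉ p.support.tail := by
  have := hp.support_nodup
  rw [← cons_tail_support] at this
  exact (List.nodup_cons.mp this).1

lemma isCycle_append_of_isPath {p : G.Walk u v} {q : G.Walk v u} (hp : p.IsPath) (hq : q.IsPath)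
    (hne : u ≠ v) (hadj : ¬ G.Adj u v)
    (hpq : ∀ w ∈ p.support, w ∈ q.support → w = u ∨ w = v) : (p.append q).IsCycle := by
  refine (isCycle_def _).mpr ⟨(isTrail_append p q).mpr ⟨hp.isTrail, hq.isTrail, ?_⟩, ?_, ?_⟩
  · intro e hep heq
    induction e using Sym2.ind with
    | h c d =>
    have hcd := p.adj_of_mem_edges hep
    rcases hpq c (p.fst_mem_support_of_mem_edges hep) (q.fst_mem_support_of_mem_edges heq) with
      rfl | rfl <;>
    rcases hpq d (p.snd_mem_support_of_mem_edges hep) (q.snd_mem_support_of_mem_edges heq) with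
      rfl | rfl
    all_goals first | exact hcd.ne rfl | exact hadj hcd | exact hadj hcd.symm
  · intro h
    have hlen : (p.append q).length = 0 := by rw [h]; rfl
    rw [length_append] at hlen
    exact hne (eq_of_length_eq_zero (p := p) (by omega))
  · rw [tail_support_append, List.nodup_append]
    refine ⟨hp.support_nodup.sublist (List.tail_sublist _),
      hq.support_nodup.sublist (List.tail_sublist _), fun w hwp w' hwq hww' ↦ ?_⟩
    subst hww'
    rcases hpq w (List.mem_of_mem_tail hwp) (List.mem_of_mem_tail hwq) with rfl | rfl
    · exact hp.start_notMem_tail_support hwp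
    · exact hq.start_notMem_tail_support hwq

lemma IsCycle.snd_penultimate_notMem_edges {c : G.Walk u u} (hc : c.IsCycle)
    (hlen : 4 ≤ c.length) : s(c.snd, c.penultimate) ∉ c.edges := by
  have hedges : c.edges = s(u, c.snd) :: c.tail.edges := by
    conv_lhs => rw [← c.cons_tail_eq hc.not_nil]
    rw [edges_cons]
  rw [hedges, List.mem_cons, not_or]
  refine ⟨fun h ↦ ?_, fun h ↦ ?_⟩
  · rcases Sym2.eq_iff.mp h with ⟨h, -⟩ | ⟨-, h⟩
    · exact (c.adj_snd hc.not_nil).ne h.symm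
    · exact (c.adj_penultimate hc.not_nil).ne h
  · have := hc.isPath_tail.eq_snd_of_mem_edges h
    rw [snd, getVert_tail, penultimate] at this
    have := hc.getVert_injOn (by simp; omega) (by simp; omega) this
    omega

end Walk

lemma Reachable.exists_isChordless_spanningCoe_induce {s : Set V} {u v : V}
    (h : (G.induce s).spanningCoe.Reachable u v) (hu : u ∈ s) :
    ∃ p : G.Walk u v, p.IsPath ∧ p.IsChordless ∧ ∀ w ∈ p.support, w ∈ s := by
  classical
  obtain ⟨q, hq⟩ := h.exists_walk_length_eq_dist
  have hqs : ∀ w ∈ q.support, w ∈ s := fun w hw ↦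
    (q.takeUntil w hw).reachable.mem_of_spanningCoe_induce hu
  refine ⟨q.mapLe (G.spanningCoe_induce_le s), (Walk.isPath_mapLe _).mpr
    (q.isPath_of_length_eq_dist hq), ?_, (Walk.support_mapLe_eq_support _ q).symm ▸ hqs⟩
  rw [Walk.isChordless_iff_forall_mem_edges, Walk.support_mapLe_eq_support,
    Walk.edges_mapLe_eq_edges]
  intro w w' hw hw' hadj
  exact (Walk.isChordless_of_length_eq_dist hq).mem_edges hw hw'
    (spanningCoe_induce_adj.mpr ⟨hadj, hqs w hw, hqs w' hw'⟩)

lemma IsChordal.adj_of_isChordless (hG : G.IsChordal) {u v : V} (hne : u ≠ v)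
    {p q : G.Walk u v} (hp : p.IsPath) (hq : q.IsPath) (hpc : p.IsChordless) (hqc : q.IsChordless)
    (hpq : ∀ w ∈ p.support, w ∈ q.support → w = u ∨ w = v)
    (hcross : ∀ w ∈ p.support, ∀ w' ∈ q.support, G.Adj w w' →
      w ∈ q.support ∨ w' ∈ p.support) :
    G.Adj u v := by
  -- otherwise `p` followed by `q` backwards is a cycle of length at least 4 without chords
  by_contra hadj
  have two_le : ∀ r : G.Walk u v, 2 ≤ r.length := fun r ↦ by
    rcases r with _ | ⟨h, _ | ⟨h', r⟩⟩
    · exact absurd rfl hne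
    · exact absurd h hadj
    · simp
  have hcyc := Walk.isCycle_append_of_isPath hp hq.reverse hne hadj
    (by simpa only [Walk.support_reverse, List.mem_reverse] using hpq)
  obtain ⟨w, w', hw, hw', hww', hchord⟩ :=
    hG u _ hcyc (by have := two_le p; have := two_le q; simp; omega)
  simp only [Walk.mem_support_append_iff, Walk.support_reverse, List.mem_reverse] at hw hw'
  simp only [Walk.edges_append, Walk.edges_reverse, List.mem_append, List.mem_reverse,
    not_or] at hchord
  have inP (h : w ∈ p.support) (h' : w' ∈ p.support) := hchord.1 (hpc.mem_edges h h' hww')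
  have inQ (h : w ∈ q.support) (h' : w' ∈ q.support) := hchord.2 (hqc.mem_edges h h' hww')
  rcases hw with hw | hw <;> rcases hw' with hw' | hw'
  · exact inP hw hw'
  · exact (hcross w hw w' hw' hww').elim (inQ · hw') (inP hw)
  · exact (hcross w' hw' w hw hww'.symm).elim (inQ hw) (inP · hw')
  · exact inQ hw hw'

-- `s` is what remains after deleting a minimal `a`-`b` separator `S`.
lemma IsChordal.isClique_of_reachable_insert (hG : G.IsChordal) {s S : Set V} {a b : V}
    (ha : a ∈ s) (hb : b ∈ s) (hsep : ¬ (G.induce s).spanningCoe.Reachable a b)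
    (hS : ∀ x ∈ S, (G.induce (insert x s)).spanningCoe.Reachable a b) : G.IsClique S := by
  set H := (G.induce s).spanningCoe
  intro x hx z hz hxz
  by_contra hnadj
  have path_through : ∀ c d, c ∈ s → ¬ H.Reachable c d →
      (G.induce (insert x s)).spanningCoe.Reachable c d →
      (G.induce (insert z s)).spanningCoe.Reachable c d →
      ∃ p : G.Walk x z, p.IsPath ∧ p.IsChordless ∧
        ∀ w ∈ p.support, w = x ∨ w = z ∨ H.Reachable c w := by
    intro c d hc hcd hx' hz'
    obtain ⟨y, hcy, hyx⟩ := exists_adj_of_reachable_insert hx' hcd hc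
    obtain ⟨y', hcy', hy'z⟩ := exists_adj_of_reachable_insert hz' hcd hc
    set T := insert x (insert z {w | H.Reachable c w})
    have hxT : x ∈ T := Set.mem_insert _ _
    have hzT : z ∈ T := Set.mem_insert_of_mem _ (Set.mem_insert _ _)
    have hcT : {w | H.Reachable c w} ⊆ T := fun _ hw ↦
      Set.mem_insert_of_mem _ (Set.mem_insert_of_mem _ hw)
    have hyy' : (G.induce T).spanningCoe.Reachable y y' :=
      (hcy.spanningCoe_induce_setOf_reachable.symm.trans
        hcy'.spanningCoe_induce_setOf_reachable).mono (spanningCoe_induce_mono hcT)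
    have hxz' : (G.induce T).spanningCoe.Reachable x z :=
      (spanningCoe_induce_adj.mpr ⟨hyx.symm, hxT, hcT hcy⟩).reachable.trans
        (hyy'.trans (spanningCoe_induce_adj.mpr ⟨hy'z, hcT hcy', hzT⟩).reachable)
    obtain ⟨p, hp, hpc, hpT⟩ := hxz'.exists_isChordless_spanningCoe_induce hxT
    exact ⟨p, hp, hpc, fun w hw ↦ by simpa [T] using hpT w hw⟩
  obtain ⟨p, hp, hpc, hpa⟩ := path_through a b ha hsep (hS x hx) (hS z hz)
  obtain ⟨q, hq, hqc, hqb⟩ :=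
    path_through b a hb (hsep ∘ Reachable.symm) (hS x hx).symm (hS z hz).symm
  refine hnadj (hG.adj_of_isChordless hxz hp hq hpc hqc (fun w hwp hwq ↦ ?_) ?_)
  · rcases hpa w hwp with h | h | haw
    · exact .inl h
    · exact .inr h
    rcases hqb w hwq with h | h | hbw
    · exact .inl h
    · exact .inr h
    exact absurd (haw.trans hbw.symm) hsep
  · intro w hwp w' hwq hww'
    rcases hpa w hwp with rfl | rfl | haw
    · exact .inl q.start_mem_support
    · exact .inl q.end_mem_support
    rcases hqb w' hwq with rfl | rfl | hbw'
    · exact .inr p.start_mem_support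
    · exact .inr p.end_mem_support
    exact absurd ((haw.spanningCoe_induce_of_adj ha hww'
      (hbw'.mem_of_spanningCoe_induce hb)).trans hbw'.symm) hsep

lemma IsChordal.exists_isClique_separator (hG : G.IsChordal) {s : Finset V} {a b : V}
    (ha : a ∈ s) (hb : b ∈ s) (hab : a ≠ b) (hadj : ¬ G.Adj a b) :
    ∃ S ⊆ s, a ∉ S ∧ b ∉ S ∧ G.IsClique (S : Set V) ∧
      ¬ (G.induce (↑s \ ↑S)).spanningCoe.Reachable a b := by
  classical
  let Separates (S : Finset V) : Prop :=
    a ∉ S ∧ b ∉ S ∧ ¬ (G.induce (↑s \ ↑S)).spanningCoe.Reachable a b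
  have separates_erase : Separates ((s.erase a).erase b) := by
    refine ⟨by simp, by simp, fun ⟨p⟩ ↦ ?_⟩
    have hsnd := p.adj_snd (Walk.not_nil_of_ne hab)
    obtain ⟨hasnd, -, hsnds⟩ := spanningCoe_induce_adj.mp hsnd
    have : p.snd = a ∨ p.snd = b := by simp at hsnds; tauto
    rcases this with h | h
    · exact hasnd.ne h.symm
    · exact hadj (h ▸ hasnd)
  obtain ⟨S, hS, hmin⟩ := (s.powerset.filter Separates).exists_min_image Finset.card
    ⟨_, Finset.mem_filter.mpr ⟨Finset.mem_powerset.mpr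
      ((Finset.erase_subset _ _).trans (Finset.erase_subset _ _)), separates_erase⟩⟩
  obtain ⟨hSs, haS, hbS, hsep⟩ := Finset.mem_filter.mp hS
  refine ⟨S, Finset.mem_powerset.mp hSs, haS, hbS, hG.isClique_of_reachable_insert
    (by simp [ha, haS]) (by simp [hb, hbS]) hsep fun x hx ↦ ?_, hsep⟩
  have hxs : x ∈ s := Finset.mem_powerset.mp hSs hx
  have hnot : ¬ Separates (S.erase x) := fun h ↦ by
    have := hmin _ (Finset.mem_filter.mpr
      ⟨Finset.mem_powerset.mpr ((S.erase_subset x).trans (Finset.mem_powerset.mp hSs)), h⟩)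
    exact (Finset.card_erase_lt_of_mem hx).not_ge this
  have hset : (↑s \ ↑(S.erase x) : Set V) = insert x (↑s \ ↑S) := by
    ext w; by_cases hw : w = x <;> simp [hw, hxs]
  rw [← hset]
  by_contra h
  exact hnot ⟨fun h' ↦ haS (Finset.mem_of_mem_erase h'),
    fun h' ↦ hbS (Finset.mem_of_mem_erase h'), h⟩

def IsSimplicialIn (G : SimpleGraph V) (s : Set V) (v : V) : Prop :=
  G.IsClique (G.neighborSet v ∩ s)

lemma IsSimplicialIn.of_subset {s t : Set V} {v : V} (h : G.IsSimplicialIn t v)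
    (hst : G.neighborSet v ∩ s ⊆ t) : G.IsSimplicialIn s v :=
  h.subset (Set.subset_inter Set.inter_subset_left hst)

theorem IsChordal.exists_isSimplicialIn_notMem (hG : G.IsChordal) (s : Finset V) {K : Set V}
    (hK : G.IsClique K) (hsK : ¬ ↑s ⊆ K) : ∃ v ∈ s, v ∉ K ∧ G.IsSimplicialIn s v := by
  classical
  induction s using Finset.strongInduction generalizing K with
  | H s ih =>
  by_cases hs : G.IsClique (s : Set V)
  · obtain ⟨v, hvs, hvK⟩ := Set.not_subset.mp hsK
    exact ⟨v, hvs, hvK, hs.subset Set.inter_subset_right⟩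
  obtain ⟨a, ha, b, hb, hab, hadj⟩ : ∃ a ∈ s, ∃ b ∈ s, a ≠ b ∧ ¬ G.Adj a b := by
    simpa [IsClique, Set.Pairwise] using hs
  obtain ⟨S, hSs, haS, hbS, hS, hsep⟩ := hG.exists_isClique_separator ha hb hab hadj
  set H := (G.induce (↑s \ ↑S)).spanningCoe
  have simplicial_on_side : ∀ c d, c ∈ s → c ∉ S → d ∈ s → d ∉ S →
      ¬ H.Reachable c d →
      (∀ k ∈ K, ¬ H.Reachable c k) → ∃ v ∈ s, v ∉ K ∧ G.IsSimplicialIn s v := by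
    intro c d hc hcS hd hdS hcd hcK
    have hcs : c ∈ (↑s \ ↑S : Set V) := ⟨hc, hcS⟩
    let t := S ∪ s.filter (H.Reachable c ·)
    have hts : t ⊂ s := Finset.ssubset_iff_subset_ne.mpr
      ⟨Finset.union_subset hSs (Finset.filter_subset _ _),
        fun h ↦ by
          have hdt : d ∈ t := h ▸ hd
          simp only [t, Finset.mem_union, Finset.mem_filter] at hdt
          tauto⟩
    obtain ⟨v, hvt, hvS, hv⟩ := ih t hts hS (fun h ↦ hcS (h (by simp [t, hc])))
    simp only [t, Finset.mem_union, Finset.mem_filter] at hvt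
    obtain ⟨hvs, hcv⟩ := hvt.resolve_left hvS
    refine ⟨v, hvs, fun hvK ↦ hcK v hvK hcv, hv.of_subset fun w ⟨hvw, hws⟩ ↦ ?_⟩
    by_cases hwS : w ∈ S
    · exact Finset.mem_union_left _ hwS
    · exact Finset.mem_union_right _
        (Finset.mem_filter.mpr ⟨hws, hcv.spanningCoe_induce_of_adj hcs hvw ⟨hws, hwS⟩⟩)
  -- no edge joins the sides of `a` and `b`, so the clique `K` meets at most one of them
  by_cases hKa : ∃ k ∈ K, H.Reachable a k
  · obtain ⟨k, hk, hak⟩ := hKa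
    refine simplicial_on_side b a hb hbS ha haS (hsep ∘ Reachable.symm)
      fun k' hk' hbk' ↦ hsep ?_
    have hkk' : k ≠ k' := fun h ↦ hsep (hak.trans (h ▸ hbk'.symm))
    exact (hak.spanningCoe_induce_of_adj ⟨ha, haS⟩ (hK hk hk' hkk')
      (hbk'.mem_of_spanningCoe_induce ⟨hb, hbS⟩)).trans hbk'.symm
  · exact simplicial_on_side a b ha haS hb hbS hsep (by simpa using hKa)

def IsPerfectEliminationOrder {ι : Type*} [LT ι] (G : SimpleGraph V) (f : ι → V) : Prop :=
  ∀ i j k, i < j → i < k → j ≠ k →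
    G.Adj (f i) (f j) → G.Adj (f i) (f k) → G.Adj (f j) (f k)

lemma IsPerfectEliminationOrder.cons {n : ℕ} {f : Fin n → V} {v : V}
    (hf : G.IsPerfectEliminationOrder f) (hinj : Function.Injective f)
    (hv : G.IsSimplicialIn (Set.range f) v) :
    G.IsPerfectEliminationOrder (Fin.cons v f : Fin (n + 1) → V) := by
  intro i j k hij hik hjk
  obtain ⟨j, rfl⟩ := Fin.exists_succ_eq.mpr (Fin.ne_zero_of_lt hij)
  obtain ⟨k, rfl⟩ := Fin.exists_succ_eq.mpr (Fin.ne_zero_of_lt hik)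
  cases i using Fin.cases with
  | zero =>
    simp only [Fin.cons_zero, Fin.cons_succ]
    exact fun hvj hvk ↦
      hv ⟨hvj, j, rfl⟩ ⟨hvk, k, rfl⟩ (hinj.ne fun h ↦ hjk (congrArg _ h))
  | succ i =>
    simp only [Fin.cons_succ]
    exact hf i j k (Fin.succ_lt_succ_iff.mp hij) (Fin.succ_lt_succ_iff.mp hik)
      fun h ↦ hjk (congrArg _ h)

theorem IsChordal.exists_perfectEliminationOrder_of_card_eq (hG : G.IsChordal) (n : ℕ) :
    ∀ s : Finset V, s.card = n → ∃ f : Fin n → V,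
      Function.Injective f ∧ Set.range f = s ∧ G.IsPerfectEliminationOrder f := by
  classical
  induction n with
  | zero =>
    intro s hs
    exact ⟨finZeroElim, fun i ↦ i.elim0, by simp [Finset.card_eq_zero.mp hs],
      fun i ↦ i.elim0⟩
  | succ n ih =>
    intro s hs
    obtain ⟨v, hvs, hv⟩ := hG.exists_isSimplicialIn_notMem s (K := ∅) (by simp)
      (by simp [← Finset.card_eq_zero, hs])
    obtain ⟨f, hinj, hrange, hf⟩ := ih (s.erase v) (by simp [Finset.card_erase_of_mem hvs, hs])
    refine ⟨Fin.cons v f, Fin.cons_injective_iff.mpr ⟨by simp [hrange], hinj⟩,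
      by simp [hrange, hvs], hf.cons hinj (hv.2.of_subset ?_)⟩
    rw [hrange]
    exact Set.inter_subset_right.trans (Finset.coe_subset.mpr (s.erase_subset v))

theorem IsChordal.exists_perfectEliminationOrder [Fintype V] (hG : G.IsChordal) :
    ∃ e : Fin (Fintype.card V) ≃ V, G.IsPerfectEliminationOrder e := by
  obtain ⟨f, hinj, hrange, hf⟩ :=
    hG.exists_perfectEliminationOrder_of_card_eq _ Finset.univ Finset.card_univ
  exact ⟨Equiv.ofBijective f ⟨hinj, Set.range_eq_univ.mp (by simpa using hrange)⟩, hf⟩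

theorem IsPerfectEliminationOrder.isChordal {ι : Type*} [LinearOrder ι] {e : ι ≃ V}
    (he : G.IsPerfectEliminationOrder e) : G.IsChordal := by
  classical
  intro v c hc hlen
  obtain ⟨m, hm, hmin⟩ := c.support.toFinset.exists_min_image e.symm ⟨v, by simp⟩
  rw [List.mem_toFinset] at hm
  set c' := c.rotate m hm
  have hc' : c'.IsCycle := hc.rotate hm
  have later : ∀ w ∈ c'.support, w ≠ m → e.symm m < e.symm w := fun w hw hwm ↦
    (hmin w (by simpa [c'] using hw)).lt_of_ne (e.symm.injective.ne hwm.symm)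
  have hsnd := c'.adj_snd hc'.not_nil
  have hpen := (c'.adj_penultimate hc'.not_nil).symm
  refine ⟨c'.snd, c'.penultimate, (c.mem_support_rotate_iff m hm).mp (c'.getVert_mem_support _),
    (c.mem_support_rotate_iff m hm).mp (c'.getVert_mem_support _), ?_, fun h ↦
      hc'.snd_penultimate_notMem_edges (by simpa [c'] using hlen)
        ((c.rotate_edges m hm).mem_iff.mpr h)⟩
  simpa using he (e.symm m) (e.symm c'.snd) (e.symm c'.penultimate)
    (later _ (c'.getVert_mem_support 1) hsnd.ne.symm)
    (later _ (c'.getVert_mem_support _) hpen.ne.symm)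
    (e.symm.injective.ne hc'.snd_ne_penultimate) (by simpa using hsnd) (by simpa using hpen)

end SimpleGraph

theorem chordal_iff_perfect_elimination_ordering_general {V : Type} [Fintype V]
    (G : SimpleGraph V) :
    G.IsChordal ↔ ∃ e : Fin (Fintype.card V) ≃ V,
      ∀ i j k : Fin (Fintype.card V), i < j → i < k → j ≠ k →
        G.Adj (e i) (e j) → G.Adj (e i) (e k) → G.Adj (e j) (e k) :=
  ⟨fun hG ↦ hG.exists_perfectEliminationOrder,
    fun ⟨_, he⟩ ↦ SimpleGraph.IsPerfectEliminationOrder.isChordal he⟩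

/-- A finite simple graph is chordal iff it has a perfect elimination
ordering: an enumeration `e` of the vertices such that, for each `i`, the vertex `e i`
together with its later neighbours induces a complete graph. -/
theorem chordal_iff_perfect_elimination_ordering {V : Type} [Fintype V] [DecidableEq V]
    (G : SimpleGraph V) :
    G.IsChordal ↔ ∃ e : Fin (Fintype.card V) ≃ V,
      ∀ i j k : Fin (Fintype.card V), i < j → i < k → j ≠ k →
        G.Adj (e i) (e j) → G.Adj (e i) (e k) → G.Adj (e j) (e k) :=
  chordal_iff_perfect_elimination_ordering_general G
end

section
/- Suppose for every pair of vertices x, y of G with dist(x,y) ≥ g, every finite S ⊆ V(G), and all configurations α on {x}, β on {y}, σ on S with ασ and σβ globally admissible, the configuration ασβ is globally admissible. Then Hom(G,H) satisfies TSSM with gap g (for arbitrary finite sets A and B in place of {x} and {y}). -/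
/-!
Call a pair `(A, B)` of vertex sets gluable when every pair of globally admissible
configurations `ασ`, `σβ` with finite `S` combines to a globally admissible `ασβ`. This
property is symmetric in `A` and `B`, and it passes to unions: to glue `β` on `B₁ ∪ B₂`,
first glue its restriction to `B₁`, producing `ω₃`, and then glue `B₂` across the enlarged
separating set `S ∪ B₁`, on which `ω₃` serves as the middle configuration. Induction on the
sizes of `A` and `B` therefore reduces TSSM to pairs of single vertices.
-/

namespace LoopyGraph

open Set

variable {VG VH : Type*} (G : LoopyGraph VG) (H : LoopyGraph VH)

def Glues (A B : Set VG) : Prop :=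
  ∀ S : Set VG, S.Finite → ∀ α σ β : VG → VH,
    (∃ ω, G.IsHom H ω ∧ EqOn ω α A ∧ EqOn ω σ S) →
    (∃ ω, G.IsHom H ω ∧ EqOn ω σ S ∧ EqOn ω β B) →
    ∃ ω, G.IsHom H ω ∧ EqOn ω α A ∧ EqOn ω σ S ∧ EqOn ω β B

variable {G H}

theorem DistGe.mono {A A' B B' : Set VG} {g : ℕ} (h : G.DistGe A B g) (hA : A' ⊆ A)
    (hB : B' ⊆ B) : G.DistGe A' B' g :=
  fun x hx y hy => h x (hA hx) y (hB hy)

theorem glues_singleton_iff {x y : VG} :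
    G.Glues H {x} {y} ↔ ∀ S : Set VG, S.Finite → ∀ α σ β : VG → VH,
      (∃ ω, G.IsHom H ω ∧ ω x = α x ∧ ∀ z ∈ S, ω z = σ z) →
      (∃ ω, G.IsHom H ω ∧ (∀ z ∈ S, ω z = σ z) ∧ ω y = β y) →
      ∃ ω, G.IsHom H ω ∧ ω x = α x ∧ (∀ z ∈ S, ω z = σ z) ∧ ω y = β y := by
  simp only [Glues, eqOn_singleton]
  rfl

theorem Glues.symm {A B : Set VG} (h : G.Glues H A B) : G.Glues H B A := by
  intro S hS α σ β hασ hσβ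
  obtain ⟨ω₁, hω₁, hα₁, hσ₁⟩ := hασ
  obtain ⟨ω₂, hω₂, hσ₂, hβ₂⟩ := hσβ
  obtain ⟨ω, hω, hβ, hσ, hα⟩ := h S hS β σ α ⟨ω₂, hω₂, hβ₂, hσ₂⟩ ⟨ω₁, hω₁, hσ₁, hα₁⟩
  exact ⟨ω, hω, hα, hσ, hβ⟩

theorem glues_empty_right (A : Set VG) : G.Glues H A ∅ :=
  fun _ _ _ _ _ ⟨ω, hω, hα, hσ⟩ _ => ⟨ω, hω, hα, hσ, eqOn_empty _ _⟩

theorem Glues.union_right {A B₁ B₂ : Set VG} (hB₁ : B₁.Finite) (h₁ : G.Glues H A B₁)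
    (h₂ : G.Glues H A B₂) : G.Glues H A (B₁ ∪ B₂) := by
  intro S hS α σ β hασ hσβ
  obtain ⟨ω₂, hω₂, hσ₂, hβ₂⟩ := hσβ
  obtain ⟨ω₃, hω₃, hα₃, hσ₃, hβ₃⟩ :=
    h₁ S hS α σ β hασ ⟨ω₂, hω₂, hσ₂, hβ₂.mono subset_union_left⟩
  have hω₂₃ : EqOn ω₂ ω₃ (S ∪ B₁) :=
    fun z hz => hz.elim (fun hz => (hσ₂ hz).trans (hσ₃ hz).symm)
      (fun hz => (hβ₂ (Or.inl hz)).trans (hβ₃ hz).symm)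
  obtain ⟨ω, hω, hα, hω₃, hβ⟩ := h₂ (S ∪ B₁) (hS.union hB₁) α ω₃ β
    ⟨ω₃, hω₃, hα₃, eqOn_refl _ _⟩ ⟨ω₂, hω₂, hω₂₃, hβ₂.mono subset_union_right⟩
  exact ⟨ω, hω, hα, (hω₃.mono subset_union_left).trans hσ₃,
    ((hω₃.mono subset_union_right).trans hβ₃).union hβ⟩

theorem Glues.of_forall_singleton_right {A B : Set VG} (hB : B.Finite)
    (h : ∀ b ∈ B, G.Glues H A {b}) : G.Glues H A B := by
  induction B, hB using Set.Finite.induction_on with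
  | empty => exact glues_empty_right A
  | @insert b B _ _ ih =>
    rw [insert_eq]
    exact (h b (mem_insert b B)).union_right (finite_singleton b)
      (ih fun b' hb' => h b' (mem_insert_of_mem b hb'))

theorem Glues.of_forall_singleton {A B : Set VG} (hA : A.Finite) (hB : B.Finite)
    (h : ∀ a ∈ A, ∀ b ∈ B, G.Glues H {a} {b}) : G.Glues H A B :=
  of_forall_singleton_right hB fun b hb =>
    (of_forall_singleton_right hA fun a ha => (h a ha b hb).symm).symm

end LoopyGraph

theorem TSSM_of_singletons_general {VG VH : Type} (G : LoopyGraph VG) (H : LoopyGraph VH)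
    (g : ℕ)
    (hsing : ∀ x y : VG, G.DistGe {x} {y} g → ∀ S : Set VG, S.Finite →
      ∀ α σ β : VG → VH,
        (∃ ω, G.IsHom H ω ∧ ω x = α x ∧ ∀ z ∈ S, ω z = σ z) →
        (∃ ω, G.IsHom H ω ∧ (∀ z ∈ S, ω z = σ z) ∧ ω y = β y) →
        ∃ ω, G.IsHom H ω ∧ ω x = α x ∧ (∀ z ∈ S, ω z = σ z) ∧ ω y = β y) :
    G.TSSM H g := by
  intro A B S hA hB hS hdist
  refine LoopyGraph.Glues.of_forall_singleton hA hB (fun a ha b hb => ?_) S hS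
  exact LoopyGraph.glues_singleton_iff.mpr <| hsing a b <|
    hdist.mono (Set.singleton_subset_iff.mpr ha) (Set.singleton_subset_iff.mpr hb)

/-- If the TSSM gluing condition with gap `g` holds for pairs of single
vertices `x, y` (against arbitrary finite `S`), then `Hom(G, H)` satisfies TSSM with gap `g`
for arbitrary finite sets `A` and `B`. -/
theorem TSSM_of_singletons {VG VH : Type} [Fintype VH] (G : LoopyGraph VG) (H : LoopyGraph VH)
    (hG : G.IsBoard) (g : ℕ)
    (hsing : ∀ x y : VG, G.DistGe {x} {y} g → ∀ S : Set VG, S.Finite →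
      ∀ α σ β : VG → VH,
        (∃ ω, G.IsHom H ω ∧ ω x = α x ∧ ∀ z ∈ S, ω z = σ z) →
        (∃ ω, G.IsHom H ω ∧ (∀ z ∈ S, ω z = σ z) ∧ ω y = β y) →
        ∃ ω, G.IsHom H ω ∧ ω x = α x ∧ (∀ z ∈ S, ω z = σ z) ∧ ω y = β y) :
    G.TSSM H g :=
  TSSM_of_singletons_general G H g hsing
end

section
/- Let T be a finite nontrivial looped tree (a tree plus possibly some loops, with at least 2 vertices). If T is dismantlable, then the set Loop(T) of looped vertices of T is nonempty and induces a connected subgraph of T. -/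
/-- A graph, possibly with loops: a symmetric relation on vertices. -/
structure LoopedGraph (V : Type*) where
  Adj : V → V → Prop
  symm : ∀ {u v : V}, Adj u v → Adj v u

namespace LoopedGraph

variable {VG VH : Type*}

/-- `G.ReachIn n x y`: there is a walk of length exactly `n` from `x` to `y`. -/
def ReachIn (G : LoopedGraph VG) : ℕ → VG → VG → Prop
  | 0, x, y => x = y
  | n + 1, x, y => ∃ z, G.Adj x z ∧ G.ReachIn n z y

/-- `dist(A, B) ≥ g`: no walk of length `< g` connects a point of `A` to a point of `B`. -/
def DistGe (G : LoopedGraph VG) (A B : Set VG) (g : ℕ) : Prop :=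
  ∀ x ∈ A, ∀ y ∈ B, ∀ n < g, ¬ G.ReachIn n x y

/-- A graph homomorphism from `G` to `H`. -/
def IsHom (G : LoopedGraph VG) (H : LoopedGraph VH) (f : VG → VH) : Prop :=
  ∀ ⦃x y : VG⦄, G.Adj x y → H.Adj (f x) (f y)

/-- `f` is a graph homomorphism on the subgraph of `G` induced by `S` (local admissibility). -/
def IsHomOn (G : LoopedGraph VG) (H : LoopedGraph VH) (f : VG → VH) (S : Set VG) : Prop :=
  ∀ ⦃x⦄, x ∈ S → ∀ ⦃y⦄, y ∈ S → G.Adj x y → H.Adj (f x) (f y)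

/-- The configuration `α|_A` is globally admissible: it extends to a point of `Hom(G,H)`. -/
def GlobAdm (G : LoopedGraph VG) (H : LoopedGraph VH) (A : Set VG) (α : VG → VH) : Prop :=
  ∃ ω : VG → VH, G.IsHom H ω ∧ ∀ x ∈ A, ω x = α x

/-- A board: countable, simple, connected, locally finite, with at least two vertices. -/
structure IsBoard (G : LoopedGraph VG) : Prop where
  countable : Countable VG
  simple : ∀ v : VG, ¬ G.Adj v v
  connected : ∀ x y : VG, ∃ n : ℕ, G.ReachIn n x y
  locallyFinite : ∀ v : VG, {w : VG | G.Adj v w}.Finite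
  nontrivial : Nontrivial VG

/-- Single-site fillability of `Hom(G, H)`. -/
def SSF (G : LoopedGraph VG) (H : LoopedGraph VH) : Prop :=
  ∀ (x : VG) (B : Set VG), B ⊆ {y : VG | G.Adj x y} →
    ∀ β : VG → VH, G.IsHomOn H β B →
      ∃ α : VG → VH, G.IsHomOn H α (insert x B) ∧ ∀ y ∈ B, α y = β y

/-- Topological strong spatial mixing with gap `g`. -/
def TSSM (G : LoopedGraph VG) (H : LoopedGraph VH) (g : ℕ) : Prop :=
  ∀ (A B S : Set VG), A.Finite → B.Finite → S.Finite → G.DistGe A B g →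
    ∀ α σ β : VG → VH,
      (∃ ω, G.IsHom H ω ∧ (∀ x ∈ A, ω x = α x) ∧ (∀ x ∈ S, ω x = σ x)) →
      (∃ ω, G.IsHom H ω ∧ (∀ x ∈ S, ω x = σ x) ∧ (∀ x ∈ B, ω x = β x)) →
      ∃ ω, G.IsHom H ω ∧ (∀ x ∈ A, ω x = α x) ∧ (∀ x ∈ S, ω x = σ x) ∧
        ∀ x ∈ B, ω x = β x

/-- Strong irreducibility with gap `g`. -/
def StrongIrred (G : LoopedGraph VG) (H : LoopedGraph VH) (g : ℕ) : Prop :=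
  ∀ (A B : Set VG), A.Finite → B.Finite → A.Nonempty → B.Nonempty → Disjoint A B →
    G.DistGe A B g → ∀ α β : VG → VH,
      G.GlobAdm H A α → G.GlobAdm H B β →
      ∃ ω, G.IsHom H ω ∧ (∀ x ∈ A, ω x = α x) ∧ ∀ x ∈ B, ω x = β x

end LoopedGraph

namespace LoopedGraph

/-- The simple graph obtained from `G` by deleting all loops. -/
def loopless {V : Type*} (G : LoopedGraph V) : SimpleGraph V where
  Adj u v := u ≠ v ∧ G.Adj u v
  symm := ⟨fun u v h => ⟨Ne.symm h.1, G.symm h.2⟩⟩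
  loopless := ⟨fun v h => h.1 rfl⟩

/-- The subgraph of `G` induced by a set `S` of vertices. -/
def induce {V : Type*} (G : LoopedGraph V) (S : Set V) : LoopedGraph S :=
  ⟨fun a b => G.Adj a.1 b.1, fun {_ _} h => G.symm h⟩

/-- A graph is loop-chordal if every vertex has a loop and its loopless version is chordal. -/
def LoopChordal {V : Type*} (G : LoopedGraph V) : Prop :=
  (∀ v, G.Adj v v) ∧ G.loopless.IsChordal

end LoopedGraph

namespace LoopedGraph

/-- The subgraph of `G` induced on `S` can be reduced to a single vertex by folds. -/
inductive DismOn {V : Type*} [DecidableEq V] (G : LoopedGraph V) : Finset V → Prop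
  | single (v : V) : DismOn G {v}
  | fold (S : Finset V) (u v : V) (hu : u ∈ S) (hv : v ∈ S) (huv : u ≠ v)
      (habsorb : ∀ w ∈ S, G.Adj u w → G.Adj v w) (hrec : DismOn G (S.erase u)) :
      DismOn G S

/-- A finite graph is dismantlable if a sequence of folds reduces it to a single vertex. -/
def Dismantlable {V : Type*} [DecidableEq V] [Fintype V] (G : LoopedGraph V) : Prop :=
  DismOn G Finset.univ

end LoopedGraph

/-!
If a looped vertex `u` is folded onto `v`, then `u ∈ N(u) ⊆ N(v)`, so `v` is a neighbour of `u`,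
and then `v ∈ N(u) ⊆ N(v)`: a looped vertex is only ever folded onto a looped neighbour. Hence
the looped vertices still present stay in one component of the loop graph throughout the
dismantling. Folds never create isolated vertices, so in a connected graph with at least two
vertices the last vertex is adjacent to itself.
-/

namespace LoopedGraph

variable {V : Type*}

theorem adj_and_adj_self_of_fold (G : LoopedGraph V) {S : Finset V} {u v : V}
    (hu : u ∈ S) (hv : v ∈ S) (habsorb : ∀ w ∈ S, G.Adj u w → G.Adj v w)
    (huu : G.Adj u u) :
    G.Adj u v ∧ G.Adj v v :=
  have huv : G.Adj u v := G.symm (habsorb u hu huu)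
  ⟨huv, habsorb v hv huv⟩

variable {G : LoopedGraph V} [DecidableEq V]

theorem DismOn.exists_loop {S : Finset V} (hS : G.DismOn S)
    (hnb : ∀ w ∈ S, ∃ z ∈ S, G.Adj w z) : ∃ v ∈ S, G.Adj v v := by
  induction hS with
  | single v =>
    obtain ⟨z, hz, hvz⟩ := hnb v (Finset.mem_singleton_self v)
    exact ⟨v, Finset.mem_singleton_self v, Finset.mem_singleton.mp hz ▸ hvz⟩
  | fold S u v hu hv huv habsorb _ ih =>
    obtain ⟨x, hx, hxx⟩ := ih fun w hw => by
      obtain ⟨z, hz, hwz⟩ := hnb w (Finset.mem_of_mem_erase hw)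
      by_cases hzu : z = u
      · subst hzu
        exact ⟨v, Finset.mem_erase.mpr ⟨huv.symm, hv⟩,
          G.symm (habsorb w (Finset.mem_of_mem_erase hw) (G.symm hwz))⟩
      · exact ⟨z, Finset.mem_erase.mpr ⟨hzu, hz⟩, hwz⟩
    exact ⟨x, Finset.mem_of_mem_erase hx, hxx⟩

theorem DismOn.reachable_of_adj_self {S : Finset V} (hS : G.DismOn S) {x y : V}
    (hx : x ∈ S) (hy : y ∈ S) (hxx : G.Adj x x) (hyy : G.Adj y y) :
    (G.induce {v | G.Adj v v}).loopless.Reachable ⟨x, hxx⟩ ⟨y, hyy⟩ := by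
  induction hS generalizing x y with
  | single v =>
    obtain rfl := Finset.mem_singleton.mp hx
    obtain rfl := Finset.mem_singleton.mp hy
    rfl
  | fold S u v hu hv huv habsorb _ ih =>
    have hsurvivor : ∀ z ∈ S, ∀ hzz : G.Adj z z, ∃ z' ∈ S.erase u, ∃ hz' : G.Adj z' z',
        (G.induce {v | G.Adj v v}).loopless.Reachable ⟨z, hzz⟩ ⟨z', hz'⟩ := by
      intro z hz hzz
      by_cases hzu : z = u
      · subst hzu
        obtain ⟨hzv, hvv⟩ := G.adj_and_adj_self_of_fold hu hv habsorb hzz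
        exact ⟨v, Finset.mem_erase.mpr ⟨huv.symm, hv⟩, hvv,
          SimpleGraph.Adj.reachable ⟨fun h => huv (congrArg Subtype.val h), hzv⟩⟩
      · exact ⟨z, Finset.mem_erase.mpr ⟨hzu, hz⟩, hzz, .rfl⟩
    obtain ⟨x', hx', hxx', hxr⟩ := hsurvivor x hx hxx
    obtain ⟨y', hy', hyy', hyr⟩ := hsurvivor y hy hyy
    exact hxr.trans ((ih hx' hy' hxx' hyy').trans hyr.symm)

end LoopedGraph

/-- If a finite nontrivial looped tree is dismantlable, then its set of looped
vertices is nonempty and induces a connected subgraph. -/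
theorem dismantlable_loopedTree_loops_connected {V : Type} [Fintype V] [DecidableEq V]
    [Nontrivial V] (T : LoopedGraph V) (htree : T.loopless.IsTree)
    (hd : T.Dismantlable) :
    {v : V | T.Adj v v}.Nonempty ∧
      ((T.induce {v : V | T.Adj v v}).loopless).Connected := by
  have hnb : ∀ w ∈ (Finset.univ : Finset V), ∃ z ∈ Finset.univ, T.Adj w z := fun w _ =>
    have ⟨z, hwz⟩ := htree.connected.preconnected.exists_adj_of_nontrivial w
    ⟨z, Finset.mem_univ z, hwz.2⟩
  obtain ⟨v₀, -, hv₀⟩ := LoopedGraph.DismOn.exists_loop hd hnb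
  have : Nonempty {v : V | T.Adj v v} := ⟨⟨v₀, hv₀⟩⟩
  refine ⟨⟨v₀, hv₀⟩, ⟨?_⟩⟩
  rintro ⟨x, hxx⟩ ⟨y, hyy⟩
  exact LoopedGraph.DismOn.reachable_of_adj_self hd (Finset.mem_univ x) (Finset.mem_univ y)
    hxx hyy
end

section
/- For a finite nontrivial looped tree T, the following are equivalent: (1) T is chordal/tree decomposable; (2) T is dismantlable; (3) Loop(T) is nonempty and connected in T. -/
/-- A graph, possibly with loops: a symmetric relation on vertices. -/
structure LoopGraph (V : Type*) where
  Adj : V → V → Prop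
  symm : ∀ {u v : V}, Adj u v → Adj v u

namespace LoopGraph

variable {VG VH : Type*}

/-- `G.ReachIn n x y`: there is a walk of length exactly `n` from `x` to `y`. -/
def ReachIn (G : LoopGraph VG) : ℕ → VG → VG → Prop
  | 0, x, y => x = y
  | n + 1, x, y => ∃ z, G.Adj x z ∧ G.ReachIn n z y

/-- `dist(A, B) ≥ g`: no walk of length `< g` connects a point of `A` to a point of `B`. -/
def DistGe (G : LoopGraph VG) (A B : Set VG) (g : ℕ) : Prop :=
  ∀ x ∈ A, ∀ y ∈ B, ∀ n < g, ¬ G.ReachIn n x y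

/-- A graph homomorphism from `G` to `H`. -/
def IsHom (G : LoopGraph VG) (H : LoopGraph VH) (f : VG → VH) : Prop :=
  ∀ ⦃x y : VG⦄, G.Adj x y → H.Adj (f x) (f y)

/-- `f` is a graph homomorphism on the subgraph of `G` induced by `S` (local admissibility). -/
def IsHomOn (G : LoopGraph VG) (H : LoopGraph VH) (f : VG → VH) (S : Set VG) : Prop :=
  ∀ ⦃x⦄, x ∈ S → ∀ ⦃y⦄, y ∈ S → G.Adj x y → H.Adj (f x) (f y)

/-- The configuration `α|_A` is globally admissible: it extends to a point of `Hom(G,H)`. -/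
def GlobAdm (G : LoopGraph VG) (H : LoopGraph VH) (A : Set VG) (α : VG → VH) : Prop :=
  ∃ ω : VG → VH, G.IsHom H ω ∧ ∀ x ∈ A, ω x = α x

/-- A board: countable, simple, connected, locally finite, with at least two vertices. -/
structure IsBoard (G : LoopGraph VG) : Prop where
  countable : Countable VG
  simple : ∀ v : VG, ¬ G.Adj v v
  connected : ∀ x y : VG, ∃ n : ℕ, G.ReachIn n x y
  locallyFinite : ∀ v : VG, {w : VG | G.Adj v w}.Finite
  nontrivial : Nontrivial VG

/-- Single-site fillability of `Hom(G, H)`. -/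
def SSF (G : LoopGraph VG) (H : LoopGraph VH) : Prop :=
  ∀ (x : VG) (B : Set VG), B ⊆ {y : VG | G.Adj x y} →
    ∀ β : VG → VH, G.IsHomOn H β B →
      ∃ α : VG → VH, G.IsHomOn H α (insert x B) ∧ ∀ y ∈ B, α y = β y

/-- Topological strong spatial mixing with gap `g`. -/
def TSSM (G : LoopGraph VG) (H : LoopGraph VH) (g : ℕ) : Prop :=
  ∀ (A B S : Set VG), A.Finite → B.Finite → S.Finite → G.DistGe A B g →
    ∀ α σ β : VG → VH,
      (∃ ω, G.IsHom H ω ∧ (∀ x ∈ A, ω x = α x) ∧ (∀ x ∈ S, ω x = σ x)) →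
      (∃ ω, G.IsHom H ω ∧ (∀ x ∈ S, ω x = σ x) ∧ (∀ x ∈ B, ω x = β x)) →
      ∃ ω, G.IsHom H ω ∧ (∀ x ∈ A, ω x = α x) ∧ (∀ x ∈ S, ω x = σ x) ∧
        ∀ x ∈ B, ω x = β x

/-- Strong irreducibility with gap `g`. -/
def StrongIrred (G : LoopGraph VG) (H : LoopGraph VH) (g : ℕ) : Prop :=
  ∀ (A B : Set VG), A.Finite → B.Finite → A.Nonempty → B.Nonempty → Disjoint A B →
    G.DistGe A B g → ∀ α β : VG → VH,
      G.GlobAdm H A α → G.GlobAdm H B β →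
      ∃ ω, G.IsHom H ω ∧ (∀ x ∈ A, ω x = α x) ∧ ∀ x ∈ B, ω x = β x

end LoopGraph

namespace LoopGraph

/-- The simple graph obtained from `G` by deleting all loops. -/
def loopless {V : Type*} (G : LoopGraph V) : SimpleGraph V where
  Adj u v := u ≠ v ∧ G.Adj u v
  symm := ⟨fun u v h => ⟨Ne.symm h.1, G.symm h.2⟩⟩
  loopless := ⟨fun v h => h.1 rfl⟩

/-- The subgraph of `G` induced by a set `S` of vertices. -/
def induce {V : Type*} (G : LoopGraph V) (S : Set V) : LoopGraph S :=
  ⟨fun a b => G.Adj a.1 b.1, fun {_ _} h => G.symm h⟩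

/-- A graph is loop-chordal if every vertex has a loop and its loopless version is chordal. -/
def LoopChordal {V : Type*} (G : LoopGraph V) : Prop :=
  (∀ v, G.Adj v v) ∧ G.loopless.IsChordal

end LoopGraph

namespace LoopGraph

/-- The subgraph of `G` induced on `S` can be reduced to a single vertex by folds. -/
inductive DismOn {V : Type*} [DecidableEq V] (G : LoopGraph V) : Finset V → Prop
  | single (v : V) : DismOn G {v}
  | fold (S : Finset V) (u v : V) (hu : u ∈ S) (hv : v ∈ S) (huv : u ≠ v)
      (habsorb : ∀ w ∈ S, G.Adj u w → G.Adj v w) (hrec : DismOn G (S.erase u)) :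
      DismOn G S

/-- A finite graph is dismantlable if a sequence of folds reduces it to a single vertex. -/
def Dismantlable {V : Type*} [DecidableEq V] [Fintype V] (G : LoopGraph V) : Prop :=
  DismOn G Finset.univ

end LoopGraph

namespace LoopGraph

/-- `G` has a chordal/tree decomposition `V = C ⊔ T ⊔ J`. -/
def ChordalTreeDecomposable {V : Type*} (G : LoopGraph V) : Prop :=
  ∃ C T J : Set V,
    Disjoint C T ∧ Disjoint C J ∧ Disjoint T J ∧ C ∪ T ∪ J = Set.univ ∧
    C.Nonempty ∧ (∀ v ∈ C, G.Adj v v) ∧ ((G.induce C).loopless).IsChordal ∧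
    ∃ (m n : ℕ) (Tf : Fin m → Set V) (Jf : Fin n → Set V),
      (∀ j, (Tf j).Nonempty) ∧
      (∀ j j', j ≠ j' → Disjoint (Tf j) (Tf j')) ∧
      (⋃ j, Tf j) = T ∧
      (∀ k, (Jf k).Nonempty) ∧
      (∀ k k', k ≠ k' → Disjoint (Jf k) (Jf k')) ∧
      (⋃ k, Jf k) = J ∧
      (∀ j, (∀ t ∈ Tf j, ¬ G.Adj t t) ∧ ((G.induce (Tf j)).loopless).IsTree) ∧
      (∀ j, ∃ r ∈ Tf j, ∃ c ∈ C, G.Adj r c ∧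
        ∀ t ∈ Tf j, ∀ c' ∈ C, G.Adj t c' → t = r ∧ c' = c) ∧
      (∀ k, ((G.induce (Jf k)).loopless).Connected) ∧
      (∀ k, ∃! c, c ∈ C ∧ ∀ u ∈ Jf k, G.Adj u c) ∧
      (∀ j j', j ≠ j' → ∀ t ∈ Tf j, ∀ t' ∈ Tf j', ¬ G.Adj t t') ∧
      (∀ k k', k ≠ k' → ∀ u ∈ Jf k, ∀ u' ∈ Jf k', ¬ G.Adj u u') ∧
      (∀ t ∈ T, ∀ u ∈ J, ¬ G.Adj t u)

end LoopGraph

/-!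
All three conditions are equivalent to `Loop(T)` inducing a connected subgraph.

Folds preserve connectedness in any graph, and a looped vertex can only fold onto a looped
neighbour; so in a connected dismantlable graph the looped vertices stay connected throughout the
dismantling. Conversely, root the tree at a loop `a`. Connectedness of `Loop(T)` makes it closed
under taking parents, and then a vertex farthest from `a` is a leaf that folds onto its parent, or
onto its grandparent when both are unlooped; repeating this dismantles `T`.

For the decomposition take `C = Loop(T)`, the components of `T - Loop(T)` as the trees and no
joined parts: in a tree each component meets the connected set `Loop(T)` in exactly one edge.
Conversely, in a tree every joined part is a single vertex, and every tree or joined part hangs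
from one vertex of `C`, so a path between two loops meets such a part only at its endpoints.
-/

namespace SimpleGraph

variable {V : Type*} {G : SimpleGraph V}

theorem IsAcyclic.isChordal (hG : G.IsAcyclic) : G.IsChordal :=
  fun _ c hc _ => absurd hc (hG c)

theorem induce_connected_of_forall_exists_walk {s : Set V} (hs : s.Nonempty)
    (h : ∀ x ∈ s, ∀ y ∈ s, ∃ p : G.Walk x y, ∀ z ∈ p.support, z ∈ s) :
    (G.induce s).Connected := by
  have : Nonempty s := hs.to_subtype
  refine Connected.mk fun ⟨x, hx⟩ ⟨y, hy⟩ => ?_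
  obtain ⟨p, hp⟩ := h x hx y hy
  exact ⟨p.induce s hp⟩

theorem Preconnected.induce_of_retraction {s t : Set V} (f : V → V) (hf : ∀ x ∈ t, f x ∈ s)
    (hfix : ∀ x ∈ s, f x = x) (hst : s ⊆ t)
    (hadj : ∀ x ∈ t, ∀ y ∈ t, G.Adj x y → f x = f y ∨ G.Adj (f x) (f y))
    (ht : (G.induce t).Preconnected) : (G.induce s).Preconnected := by
  intro x y
  let F : t → s := fun z => ⟨f z, hf z z.2⟩
  have hF : ∀ z : s, F ⟨z, hst z.2⟩ = z := fun z => Subtype.ext (hfix z z.2)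
  have hlift : ∀ a b : t, (G.induce t).Reachable a b → (G.induce s).Reachable (F a) (F b) := by
    simp only [reachable_eq_reflTransGen]
    refine Relation.ReflTransGen.lift' F fun a b hab => ?_
    rcases hadj a a.2 b b.2 hab with h | h
    · rw [Function.onFun, show F a = F b from Subtype.ext h]
    · exact .single h
  simpa only [hF] using hlift _ _ (ht ⟨x, hst x.2⟩ ⟨y, hst y.2⟩)

theorem ConnectedComponent.connected_induce_image_supp {s : Set V}
    (c : (G.induce s).ConnectedComponent) : (G.induce (Subtype.val '' c.supp)).Connected :=
  c.maximal_connected_induce_supp.1.map ⟨fun x => ⟨x.1.1, x.1, x.2, rfl⟩, fun h => h⟩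
    (by rintro ⟨_, x, hx, rfl⟩; exact ⟨⟨x, hx⟩, rfl⟩)

theorem ConnectedComponent.mem_image_supp_of_adj {s : Set V} (c : (G.induce s).ConnectedComponent)
    {x y : V} (hx : x ∈ Subtype.val '' c.supp) (hy : y ∈ s) (hxy : G.Adj x y) :
    y ∈ Subtype.val '' c.supp := by
  obtain ⟨x, hx, rfl⟩ := hx
  exact ⟨⟨y, hy⟩, (c.mem_supp_congr_adj (v := x) (w := ⟨y, hy⟩) hxy).mp hx, rfl⟩

/-- The path would otherwise pass through `c` both before and after visiting `A`. -/
theorem Walk.IsPath.start_mem_or_end_mem_of_forall_adj_eq {A : Set V} {c : V}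
    (hA : ∀ t ∈ A, ∀ s ∉ A, G.Adj t s → s = c) {x y z : V} {p : G.Walk x y} (hp : p.IsPath)
    (hz : z ∈ p.support) (hzA : z ∈ A) : x ∈ A ∨ y ∈ A := by
  classical
  by_contra! h
  have hexit : ∀ {w} (q : G.Walk z w), w ∉ A → c ∈ q.support.tail := by
    intro w q hw
    obtain ⟨d, hd, hdA, hdA'⟩ := q.exists_boundary_dart A hzA hw
    rw [← hA _ hdA _ hdA' d.adj, ← q.map_snd_darts]
    exact List.mem_map_of_mem hd
  have hnodup := hp.support_nodup
  rw [← p.take_spec hz, Walk.support_append] at hnodup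
  refine List.disjoint_of_nodup_append hnodup ?_ (hexit _ h.2)
  have := List.mem_of_mem_tail (hexit (p.takeUntil z hz).reverse h.1)
  rwa [Walk.support_reverse, List.mem_reverse] at this

theorem IsAcyclic.subsingleton_of_forall_adj (hG : G.IsAcyclic) {s : Set V} {c : V}
    (hs : (G.induce s).Preconnected) (hc : ∀ x ∈ s, G.Adj x c) : s.Subsingleton := by
  classical
  intro x hx y hy
  by_contra hxy
  obtain ⟨p⟩ := hs ⟨x, hx⟩ ⟨y, hy⟩
  have hw : G.Adj x p.snd := p.adj_snd (Walk.not_nil_of_ne fun h => hxy (congrArg Subtype.val h))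
  exact hG.cliqueFree le_rfl {x, p.snd.1, c}
    (is3Clique_triple_iff.mpr ⟨hw, hc x hx, hc _ p.snd.2⟩)

/-- A second edge would join the ends of the first without using it, but every edge of a forest
is a bridge. -/
theorem IsAcyclic.eq_and_eq_of_adj_of_adj (hG : G.IsAcyclic) {s t : Set V}
    (hs : (G.induce s).Preconnected) (ht : (G.induce t).Preconnected) (hst : Disjoint s t)
    {x x' y y' : V} (hx : x ∈ s) (hx' : x' ∈ s) (hy : y ∈ t) (hy' : y' ∈ t)
    (hxy : G.Adj x y) (hxy' : G.Adj x' y') : x = x' ∧ y = y' := by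
  by_contra hne
  let H := G.deleteEdges {s(x, y)}
  have hbridge : ¬H.Reachable x y := isBridge_iff.mp (isAcyclic_iff_forall_adj_isBridge.mp hG hxy)
  have hinside : ∀ {u : Set V}, (G.induce u).Preconnected → (x ∉ u ∨ y ∉ u) →
      ∀ a b : u, H.Reachable a b := by
    intro u hu hxyu a b
    refine (hu a b).map ⟨Subtype.val, fun {a b} hab => ?_⟩
    refine (deleteEdges_adj ..).mpr ⟨hab, ?_⟩
    rw [Set.mem_singleton_iff, Sym2.eq_iff]
    rintro (⟨rfl, rfl⟩ | ⟨rfl, rfl⟩) <;> rcases hxyu with h | h <;> simp_all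
  have hdisj : ∀ {a}, a ∈ s → a ∉ t := fun ha ha' => Set.disjoint_left.mp hst ha ha'
  have hx'y' : H.Adj x' y' := by
    refine (deleteEdges_adj ..).mpr ⟨hxy', ?_⟩
    rw [Set.mem_singleton_iff, Sym2.eq_iff]
    rintro (⟨rfl, rfl⟩ | ⟨rfl, rfl⟩)
    · exact hne ⟨rfl, rfl⟩
    · exact hdisj hx hy'
  exact hbridge <| (hinside hs (.inr fun h => hdisj h hy) ⟨x, hx⟩ ⟨x', hx'⟩).trans <|
    hx'y'.reachable.trans (hinside ht (.inl fun h => hdisj hx h) ⟨y', hy'⟩ ⟨y, hy⟩)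

/-- Otherwise `p` extended by the edge `xy` would be the unique path to `y`, which is longer than
`p`. -/
theorem IsAcyclic.mem_support_of_adj_of_dist_lt (hG : G.IsAcyclic) {a x y : V} {p : G.Walk a x}
    (hp : p.IsPath) (hxy : G.Adj x y) (hd : G.dist a y < G.dist a x) : y ∈ p.support := by
  by_contra hy
  obtain ⟨q, hq, hlen⟩ := (p.concat hxy).reachable.exists_path_of_dist
  have hqp : q = p.concat hxy :=
    Subtype.mk.inj <| hG.subsingleton_path a y |>.elim ⟨q, hq⟩ ⟨_, hp.concat hy hxy⟩
  have := dist_le p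
  rw [hqp, Walk.length_concat] at hlen
  omega

/-- In the tree rooted at `a`: `s` contains the parent of each of its vertices. -/
def ClosedTowards (G : SimpleGraph V) (a : V) (s : Set V) : Prop :=
  ∀ ⦃x y⦄, x ∈ s → G.Adj x y → G.dist a y < G.dist a x → y ∈ s

theorem IsAcyclic.closedTowards_of_preconnected (hG : G.IsAcyclic) {s : Set V}
    (hs : (G.induce s).Preconnected) {a : V} (ha : a ∈ s) : G.ClosedTowards a s := by
  classical
  intro x y hx hxy hd
  obtain ⟨p⟩ := hs ⟨a, ha⟩ ⟨x, hx⟩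
  let q := p.map (Embedding.induce s).toHom
  have hy := q.support_bypass_subset_support <|
    hG.mem_support_of_adj_of_dist_lt q.bypass_isPath hxy hd
  rw [Walk.support_map, List.mem_map] at hy
  obtain ⟨y', -, rfl⟩ := hy
  exact y'.2

theorem IsTree.exists_adj_dist_lt (hG : G.IsTree) {a u : V} (hu : u ≠ a) :
    ∃ v, G.Adj u v ∧ G.dist a v < G.dist a u := by
  obtain ⟨p, -, hlen⟩ := hG.connected.exists_path_of_dist u a
  have hnil : ¬p.Nil := Walk.not_nil_of_ne hu
  refine ⟨p.snd, p.adj_snd hnil, ?_⟩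
  have := dist_le p.tail
  have := p.length_tail_add_one hnil
  rw [dist_comm, dist_comm (u := a)]
  omega

theorem IsTree.eq_of_adj_of_dist_lt (hG : G.IsTree) {a u w w' : V} (hw : G.Adj u w)
    (hw' : G.Adj u w') (hd : G.dist a w < G.dist a u) (hd' : G.dist a w' < G.dist a u) :
    w = w' := by
  obtain ⟨p, hp, -⟩ := hG.connected.exists_path_of_dist a u
  have hG := hG.isAcyclic
  rw [hG.eq_penultimate_of_adj_end hp hw (hG.mem_support_of_adj_of_dist_lt hp hw hd),
    hG.eq_penultimate_of_adj_end hp hw' (hG.mem_support_of_adj_of_dist_lt hp hw' hd')]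

theorem IsTree.exists_unique_adj_of_connectedComponent (hG : G.IsTree) {s : Set V}
    (hs : (G.induce s).Connected) (c : (G.induce sᶜ).ConnectedComponent) :
    ∃ r ∈ Subtype.val '' c.supp, ∃ b ∈ s, G.Adj r b ∧
      ∀ t ∈ Subtype.val '' c.supp, ∀ b' ∈ s, G.Adj t b' → t = r ∧ b' = b := by
  have hcs : Subtype.val '' c.supp ⊆ sᶜ := by
    rintro _ ⟨x, -, rfl⟩
    exact x.2
  obtain ⟨x, hx⟩ := c.nonempty_supp.image Subtype.val
  obtain ⟨a, ha⟩ := Set.nonempty_coe_sort.mp hs.nonempty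
  obtain ⟨p⟩ := hG.connected x a
  obtain ⟨d, -, hd, hd'⟩ := p.exists_boundary_dart _ hx fun h => hcs h ha
  have hb : d.snd ∈ s := by_contra fun h => hd' (c.mem_image_supp_of_adj hd h d.adj)
  refine ⟨d.fst, hd, d.snd, hb, d.adj, fun t ht b' hb' htb' => ?_⟩
  exact hG.isAcyclic.eq_and_eq_of_adj_of_adj c.connected_induce_image_supp.preconnected
    hs.preconnected (Set.disjoint_left.mpr fun x hx hxs => hcs hx hxs) ht hd hb' hb htb' d.adj

end SimpleGraph

namespace LoopGraph

open SimpleGraph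

variable {V : Type*} {T : LoopGraph V}

/-- `Loop(T)` in the paper. -/
def loops (T : LoopGraph V) : Set V := {v | T.Adj v v}

theorem loopless_induce (T : LoopGraph V) (S : Set V) :
    (T.induce S).loopless = T.loopless.induce S := by
  ext a b
  simp [loopless, induce, Subtype.ext_iff]

/-- A path between two loops meets each part `A` only at an endpoint. -/
theorem connected_loops_of_pendant (hG : T.loopless.Preconnected) {C : Set V} (hC : C.Nonempty)
    (hCL : C ⊆ T.loops)
    (hpart : ∀ z ∉ C, ∃ A : Set V, z ∈ A ∧
      (∃ c, ∀ t ∈ A, ∀ s ∉ A, T.loopless.Adj t s → s = c) ∧ ∀ x ∈ A, T.Adj x x → x = z) :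
    (T.loopless.induce T.loops).Connected := by
  refine induce_connected_of_forall_exists_walk (hC.mono hCL) fun x hx y hy => ?_
  obtain ⟨p, hp⟩ := (hG x y).exists_isPath
  refine ⟨p, fun z hz => ?_⟩
  by_cases hzC : z ∈ C
  · exact hCL hzC
  obtain ⟨A, hzA, ⟨c, hc⟩, hAloops⟩ := hpart z hzC
  rcases hp.start_mem_or_end_mem_of_forall_adj_eq hc hz hzA with hxA | hyA
  · exact hAloops x hxA hx ▸ hx
  · exact hAloops y hyA hy ▸ hy

theorem ChordalTreeDecomposable.connected_loops (hG : T.loopless.IsTree)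
    (h : T.ChordalTreeDecomposable) : (T.loopless.induce T.loops).Connected := by
  obtain ⟨C, _, _, -, hCJ, -, hcover, hC, hCloop, -, _, _, Tf, Jf, -, -, rfl, -, -, rfl,
    hTf, hroot, hJconn, hJc, hTT, hJJ, hTJ⟩ := h
  have hcases : ∀ z, z ∈ C ∨ (∃ j, z ∈ Tf j) ∨ ∃ k, z ∈ Jf k := by
    intro z
    have : z ∈ C ∪ (⋃ j, Tf j) ∪ ⋃ k, Jf k := hcover ▸ Set.mem_univ z
    simpa only [Set.mem_union, Set.mem_iUnion, or_assoc] using this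
  refine connected_loops_of_pendant hG.connected.preconnected hC hCloop fun z hz => ?_
  rcases (hcases z).resolve_left hz with ⟨j, hj⟩ | ⟨k, hk⟩
  · obtain ⟨r, -, c, -, -, hrc⟩ := hroot j
    refine ⟨Tf j, hj, ⟨c, fun t ht s hs hts => ?_⟩, fun x hx hxx => ((hTf j).1 x hx hxx).elim⟩
    rcases hcases s with hsC | ⟨j', hj'⟩ | ⟨k, hk⟩
    · exact (hrc t ht s hsC hts.2).2
    · exact (hTT j j' (by rintro rfl; exact hs hj') t ht s hj' hts.2).elim
    · exact (hTJ t (Set.mem_iUnion.mpr ⟨j, ht⟩) s (Set.mem_iUnion.mpr ⟨k, hk⟩) hts.2).elim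
  · obtain ⟨c, ⟨hc, hcJ⟩, hcuniq⟩ := hJc k
    have hsing : (Jf k).Subsingleton :=
      hG.isAcyclic.subsingleton_of_forall_adj (loopless_induce T _ ▸ hJconn k).preconnected
        fun u hu => ⟨fun h => Set.disjoint_left.mp hCJ (h ▸ hc) (Set.mem_iUnion.mpr ⟨k, hu⟩),
          hcJ u hu⟩
    refine ⟨Jf k, hk, ⟨c, fun t ht s hs hts => ?_⟩, fun x hx _ => hsing hx hk⟩
    rcases hcases s with hsC | ⟨j, hj⟩ | ⟨k', hk'⟩
    · exact hcuniq s ⟨hsC, fun u hu => hsing ht hu ▸ hts.2⟩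
    · exact (hTJ s (Set.mem_iUnion.mpr ⟨j, hj⟩) t (Set.mem_iUnion.mpr ⟨k, ht⟩)
        (T.symm hts.2)).elim
    · exact (hJJ k k' (by rintro rfl; exact hs hk') t ht s hk' hts.2).elim

theorem chordalTreeDecomposable_of_connected_loops [Finite V] (hG : T.loopless.IsTree)
    (hL : (T.loopless.induce T.loops).Connected) : T.ChordalTreeDecomposable := by
  let G' := T.loopless.induce T.loopsᶜ
  let e := Finite.equivFin G'.ConnectedComponent
  let Tf : Fin (Nat.card G'.ConnectedComponent) → Set V := fun j => Subtype.val '' (e.symm j).supp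
  have hTf_loops : ∀ j, ∀ x ∈ Tf j, ¬T.Adj x x := by
    rintro j _ ⟨x, -, rfl⟩
    exact x.2
  have hTf_conn : ∀ j, (T.loopless.induce (Tf j)).Connected :=
    fun j => (e.symm j).connected_induce_image_supp
  have hTf_disj : ∀ j j', j ≠ j' → Disjoint (Tf j) (Tf j') := fun j j' h =>
    (Set.disjoint_image_iff Subtype.val_injective).mpr
      (pairwise_disjoint_supp_connectedComponent _ (e.symm.injective.ne h))
  have hTf_adj : ∀ j {t t'}, t ∈ Tf j → ¬T.Adj t' t' → T.Adj t t' → t' ∈ Tf j := by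
    intro j t t' ht ht' h
    rcases eq_or_ne t t' with rfl | hne
    · exact ht
    · exact (e.symm j).mem_image_supp_of_adj ht ht' ⟨hne, h⟩
  have hTf_root : ∀ j, ∃ r ∈ Tf j, ∃ c ∈ T.loops, T.Adj r c ∧
      ∀ t ∈ Tf j, ∀ c' ∈ T.loops, T.Adj t c' → t = r ∧ c' = c := by
    intro j
    obtain ⟨r, hr, c, hc, hrc, huniq⟩ := hG.exists_unique_adj_of_connectedComponent hL (e.symm j)
    exact ⟨r, hr, c, hc, hrc.2, fun t ht c' hc' htc' =>
      huniq t ht c' hc' ⟨fun h => hTf_loops j t ht (h ▸ hc'), htc'⟩⟩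
  refine ⟨T.loops, T.loopsᶜ, ∅, disjoint_compl_right, Set.disjoint_empty _, Set.disjoint_empty _,
    by simp, Set.nonempty_coe_sort.mp hL.nonempty, fun _ h => h, ?_, _, 0, Tf, Fin.elim0,
    fun j => (e.symm j).nonempty_supp.image _, hTf_disj, ?_, fun k => k.elim0, fun k => k.elim0,
    by simp,
    fun j => ⟨hTf_loops j, ?_⟩, hTf_root, fun k => k.elim0, fun k => k.elim0,
    fun j j' hjj' t ht t' ht' h =>
      Set.disjoint_left.mp (hTf_disj j j' hjj') (hTf_adj j ht (hTf_loops j' t' ht') h) ht',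
    fun k => k.elim0, fun _ _ _ h => h.elim⟩
  · rw [loopless_induce]
    exact (hG.isAcyclic.induce _).isChordal
  · ext x
    refine ⟨fun hx => ?_, fun hx => ?_⟩
    · obtain ⟨j, hj⟩ := Set.mem_iUnion.mp hx
      exact hTf_loops j x hj
    · exact Set.mem_iUnion.mpr ⟨e (G'.connectedComponentMk ⟨x, hx⟩), ⟨x, hx⟩, by simp, rfl⟩
  · rw [loopless_induce]
    exact ⟨hTf_conn j, hG.isAcyclic.induce _⟩

section Dismantling

variable [DecidableEq V]

/-- Along any walk, replace `u` by `v`. -/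
theorem preconnected_induce_erase_of_fold {S : Finset V} {u v : V} (hv : v ∈ S) (huv : u ≠ v)
    (habsorb : ∀ w ∈ S, T.Adj u w → T.Adj v w)
    (hS : (T.loopless.induce (S : Set V)).Preconnected) :
    (T.loopless.induce (S.erase u : Set V)).Preconnected := by
  refine hS.induce_of_retraction (fun x => if x = u then v else x) (fun x hx => ?_)
    (fun x hx => if_neg (Finset.ne_of_mem_erase hx)) (Finset.erase_subset u S)
    (fun x hx y hy hxy => ?_)
  · split_ifs with h
    · exact Finset.mem_erase.mpr ⟨huv.symm, hv⟩
    · exact Finset.mem_erase.mpr ⟨h, hx⟩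
  · have hvw : ∀ w ∈ S, w ≠ u → T.Adj u w → v = w ∨ T.loopless.Adj v w := fun w hw hwu h => by
      by_cases hvw : v = w
      · exact .inl hvw
      · exact .inr ⟨hvw, habsorb w hw h⟩
    obtain ⟨hne, hxy⟩ := hxy
    by_cases hxu : x = u <;> by_cases hyu : y = u <;> simp only [hxu, hyu, if_true, if_false]
    · exact absurd (hxu.trans hyu.symm) hne
    · exact hvw y hy hyu (hxu ▸ hxy)
    · exact (hvw x hx hxu (hyu ▸ T.symm hxy)).imp Eq.symm (·.symm)
    · exact .inr ⟨hne, hxy⟩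

theorem DismOn.connected_induce_loops_inter {S : Finset V} (h : T.DismOn S)
    (hS : (T.loopless.induce (S : Set V)).Preconnected) (hcard : 1 < S.card) :
    (T.loopless.induce (T.loops ∩ S)).Connected := by
  induction h with
  | single v => simp at hcard
  | fold S u v hu hv huv habsorb hrec ih =>
    have hS' := preconnected_induce_erase_of_fold hv huv habsorb hS
    have hvS' : v ∈ S.erase u := Finset.mem_erase.mpr ⟨huv.symm, hv⟩
    have hrest : (T.loopless.induce (T.loops ∩ (S.erase u : Set V))).Connected := by
      by_cases hcard' : 1 < (S.erase u).card
      · exact ih hS' hcard'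
      -- `S = {u, v}`, and the neighbour of `u` in `S` must be `v`, which is then looped
      have hS'v : S.erase u = {v} := Finset.eq_singleton_iff_unique_mem.mpr
        ⟨hvS', fun w hw => Finset.card_le_one.mp (not_lt.mp hcard') w hw v hvS'⟩
      obtain ⟨p⟩ := hS ⟨u, hu⟩ ⟨v, hv⟩
      have hw : T.loopless.Adj u p.snd :=
        p.adj_snd (Walk.not_nil_of_ne fun h => huv (congrArg Subtype.val h))
      have hwv : (p.snd : V) = v :=
        Finset.mem_singleton.mp <| hS'v ▸ Finset.mem_erase.mpr ⟨hw.ne.symm, p.snd.2⟩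
      have hvL : T.Adj v v := by simpa [hwv] using habsorb _ p.snd.2 hw.2
      rw [hS'v, Finset.coe_singleton,
        Set.inter_eq_right.mpr (Set.singleton_subset_iff.mpr (show v ∈ T.loops from hvL))]
      exact Connected.of_subsingleton
    by_cases huL : u ∈ T.loops
    · have hvu : T.Adj v u := habsorb u hu huL
      have hvL : v ∈ T.loops := habsorb v hv (T.symm hvu)
      have : T.loops ∩ (S : Set V) = (T.loops ∩ (S.erase u : Set V)) ∪ {u} := by
        ext x; by_cases hx : x = u <;> simp [hx, huL, hu]
      rw [this]
      exact connected_induce_union hrest.preconnected Preconnected.of_subsingleton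
        ⟨hvL, hvS'⟩ rfl ⟨huv.symm, hvu⟩
    · have : T.loops ∩ (S : Set V) = T.loops ∩ (S.erase u : Set V) := by
        ext x; by_cases hx : x = u <;> simp [hx, huL]
      rwa [this]

theorem exists_fold_of_dist_le (hG : T.loopless.IsTree) {a : V} (ha : T.Adj a a)
    (hL : T.loopless.ClosedTowards a T.loops) {S : Finset V} (hS : T.loopless.ClosedTowards a S)
    {u : V} (hu : u ∈ S) (hua : u ≠ a)
    (hmax : ∀ x ∈ S, T.loopless.dist a x ≤ T.loopless.dist a u) :
    ∃ t ∈ S, u ≠ t ∧ ∀ w ∈ S, T.Adj u w → T.Adj t w := by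
  obtain ⟨v, huv, hvu⟩ := hG.exists_adj_dist_lt hua
  have hv : v ∈ S := hS hu huv hvu
  have hnbr : ∀ w ∈ S, T.Adj u w → w = u ∨ w = v := by
    intro w hw huw
    by_cases hwu : w = u
    · exact .inl hwu
    have hadj : T.loopless.Adj u w := ⟨Ne.symm hwu, huw⟩
    have hdw : T.loopless.dist a w < T.loopless.dist a u := by
      have := hmax w hw
      have := hG.dist_eq_dist_add_one_of_adj a hadj
      omega
    exact .inr (hG.eq_of_adj_of_dist_lt hadj huv hdw hvu)
  by_cases hvL : T.Adj v v
  · refine ⟨v, hv, huv.ne, fun w hw huw => ?_⟩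
    rcases hnbr w hw huw with rfl | rfl
    · exact T.symm huv.2
    · exact hvL
  · have huL : ¬T.Adj u u := fun h => hvL (hL h huv hvu)
    obtain ⟨t, hvt, htv⟩ := hG.exists_adj_dist_lt fun h : v = a => hvL (h ▸ ha)
    refine ⟨t, hS hv hvt htv, by rintro rfl; omega, fun w hw huw => ?_⟩
    rcases hnbr w hw huw with rfl | rfl
    · exact absurd huw huL
    · exact T.symm hvt.2

theorem dismOn_of_closedTowards (hG : T.loopless.IsTree) {a : V} (ha : T.Adj a a)
    (hL : T.loopless.ClosedTowards a T.loops) (S : Finset V) (haS : a ∈ S)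
    (hS : T.loopless.ClosedTowards a S) : T.DismOn S := by
  induction S using Finset.strongInduction with
  | H S ih =>
  obtain ⟨u, hu, hmax⟩ := S.exists_max_image (T.loopless.dist a) ⟨a, haS⟩
  by_cases hua : u = a
  · have hSa : S = {a} := Finset.eq_singleton_iff_unique_mem.mpr ⟨haS, fun x hx => by
      have := hmax x hx
      rw [hua, dist_self, Nat.le_zero, hG.connected.dist_eq_zero_iff] at this
      exact this.symm⟩
    exact hSa ▸ .single a
  obtain ⟨t, ht, hut, habsorb⟩ := exists_fold_of_dist_le hG ha hL hS hu hua hmax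
  refine .fold S u t hu ht hut habsorb (ih _ (Finset.erase_ssubset hu)
    (Finset.mem_erase.mpr ⟨Ne.symm hua, haS⟩) fun x y hx hxy hd => ?_)
  have hxS := Finset.mem_of_mem_erase hx
  refine Finset.mem_erase.mpr ⟨?_, hS hxS hxy hd⟩
  rintro rfl
  have := hmax x hxS
  omega

theorem Dismantlable.connected_loops [Fintype V] [Nontrivial V] (hG : T.loopless.Preconnected)
    (h : T.Dismantlable) : (T.loopless.induce T.loops).Connected := by
  have hpre : (T.loopless.induce (Finset.univ : Finset V)).Preconnected := by
    rw [Finset.coe_univ]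
    exact (induceUnivIso _).symm.preconnected_iff.mp hG
  have := h.connected_induce_loops_inter hpre (by simpa using Fintype.one_lt_card)
  rwa [Finset.coe_univ, Set.inter_univ] at this

theorem dismantlable_of_connected_loops [Fintype V] (hG : T.loopless.IsTree)
    (hL : (T.loopless.induce T.loops).Connected) : T.Dismantlable := by
  obtain ⟨a, ha⟩ := Set.nonempty_coe_sort.mp hL.nonempty
  exact dismOn_of_closedTowards hG ha
    (hG.isAcyclic.closedTowards_of_preconnected hL.preconnected ha) _ (Finset.mem_univ a)
    fun _ y _ _ _ => Finset.mem_univ y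

end Dismantling

end LoopGraph

/-- For a finite nontrivial looped tree `T`, the following are equivalent:
(1) `T` is chordal/tree decomposable; (2) `T` is dismantlable; (3) `Loop(T)` is nonempty and
connected in `T`. -/
theorem loopedTree_TFAE {V : Type} [Fintype V] [DecidableEq V] [Nontrivial V]
    (T : LoopGraph V) (htree : T.loopless.IsTree) :
    (T.ChordalTreeDecomposable ↔ T.Dismantlable) ∧
      (T.Dismantlable ↔
        ({v : V | T.Adj v v}.Nonempty ∧
          ((T.induce {v : V | T.Adj v v}).loopless).Connected)) := by
  have h13 : T.ChordalTreeDecomposable ↔ (T.loopless.induce T.loops).Connected :=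
    ⟨fun h => h.connected_loops htree, LoopGraph.chordalTreeDecomposable_of_connected_loops htree⟩
  have h23 : T.Dismantlable ↔ (T.loopless.induce T.loops).Connected :=
    ⟨fun h => h.connected_loops htree.connected.preconnected,
      LoopGraph.dismantlable_of_connected_loops htree⟩
  rw [LoopGraph.loopless_induce]
  exact ⟨h13.trans h23.symm,
    h23.trans ⟨fun h => ⟨Set.nonempty_coe_sort.mp h.nonempty, h⟩, And.right⟩⟩
end
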